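/- arXiv:2106.01173 — 5 statements merged into one kernel-verified Lean document; each statement's English description precedes it below -/
import Mathlib

section
/- For every k ≥ 1, S_k = S_{k-1} · ŜS_{k-1}, where for a non-empty binary string w, ŵ denotes the string obtained from w by flipping its last character. That is, the two definitions of the period-doubling sequence (via the morphism φ(a)=ab, φ(b)=aa, and via the doubling recurrence S_k = S_{k-1}·Ŝ_{k-1}) coincide. -/
/-- The morphism φ: a ↦ ab, b ↦ aa, with `false = a`, `true = b`. -/
def pdPhi (c : Bool) : List Bool := if c then [false, false] else [false, true]

/-- The k-th period-doubling sequence. -/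
def pd : ℕ → List Bool
  | 0 => [false]
  | k + 1 => (pd k).flatMap pdPhi

/-- `hat w` : `w` with its last character flipped. -/
def hat (w : List Bool) : List Bool := w.dropLast ++ (w.getLast?.map Bool.not).toList

/-!
Since φ(b) = aa is φ(a) = ab with its last letter flipped, φ maps `hat w` to `hat (φ w)`.
Applying φ to S_k = S_{k-1} · Ŝ_{k-1} therefore gives S_{k+1} = S_k · Ŝ_k, and the recurrence
follows by induction from S_1 = ab.
-/

@[simp]
lemma hat_nil : hat [] = [] := rfl

lemma hat_append_of_ne_nil (u : List Bool) {v : List Bool} (hv : v ≠ []) :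
    hat (u ++ v) = u ++ hat v := by
  simp [hat, List.dropLast_append_of_ne_nil hv, List.getLast?_append_of_ne_nil u hv]

lemma hat_append_singleton (l : List Bool) (c : Bool) : hat (l ++ [c]) = l ++ [!c] := by
  simp [hat]

lemma flatMap_hat {f : Bool → List Bool} (hf : ∀ c, f (!c) = hat (f c)) (w : List Bool) :
    (hat w).flatMap f = hat (w.flatMap f) := by
  rcases List.eq_nil_or_concat w with rfl | ⟨l, c, rfl⟩
  · rfl
  by_cases hc : f c = []
  · have hf_nil : ∀ b, f b = [] := by
      intro b
      rcases Bool.eq_or_eq_not b c with rfl | rfl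
      · exact hc
      · rw [hf, hc, hat_nil]
    have hflatMap_nil (x : List Bool) : x.flatMap f = [] :=
      List.flatMap_eq_nil_iff.mpr fun b _ => hf_nil b
    rw [hflatMap_nil, hflatMap_nil, hat_nil]
  · simp [hat_append_singleton, hf, hat_append_of_ne_nil _ hc]

lemma pdPhi_not (c : Bool) : pdPhi (!c) = hat (pdPhi c) := by
  cases c <;> rfl

lemma pd_succ (k : ℕ) : pd (k + 1) = pd k ++ hat (pd k) := by
  induction k with
  | zero => rfl
  | succ k ih =>
    calc pd (k + 2) = (pd k ++ hat (pd k)).flatMap pdPhi := by rw [← ih]; rfl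
      _ = pd (k + 1) ++ hat (pd (k + 1)) := by
        rw [List.flatMap_append, flatMap_hat pdPhi_not]; rfl

theorem pd_doubling (k : ℕ) (hk : 1 ≤ k) : pd k = pd (k - 1) ++ hat (pd (k - 1)) := by
  obtain ⟨n, rfl⟩ := Nat.exists_eq_add_of_le' hk
  exact pd_succ n
end

section
/- If a string w is primitive, then ww has no internal occurrence of w; that is, the only occurrences of w as a substring of ww are at positions 1 and |w|+1. -/
/-!
An occurrence of `w` at position `i` with `0 < i < |w|` says that `w = uv = vu` with
`u = w[0, i)` and `v = w[i, |w|)` both nonempty. Commuting words are powers of a common word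
(Lyndon–Schützenberger, by the Euclidean algorithm on lengths), so `w = x^(k+m)` with `k, m ≥ 1`,
contradicting primitivity.
-/

/-- A string is primitive if it is not a proper power `x^j` with `j ≥ 2`. -/
def Primitive {α : Type*} (w : List α) : Prop :=
  ∀ (x : List α) (j : ℕ), 2 ≤ j → w ≠ (List.replicate j x).flatten

namespace List

variable {α : Type*}

theorem exists_eq_flatten_replicate_of_append_comm {u v : List α} (h : u ++ v = v ++ u) :
    ∃ (x : List α) (k m : ℕ), u = (replicate k x).flatten ∧ v = (replicate m x).flatten := by
  induction hn : u.length + v.length using Nat.strong_induction_on generalizing u v with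
  | _ n ih =>
  wlog huv : u.length ≤ v.length generalizing u v
  · obtain ⟨x, k, m, hu, hv⟩ := this h.symm (by omega) (by omega)
    exact ⟨x, m, k, hv, hu⟩
  rcases eq_or_ne u [] with rfl | hu
  · exact ⟨v, 0, 1, rfl, by simp⟩
  obtain ⟨v', rfl⟩ : u <+: v :=
    prefix_of_prefix_length_le (prefix_append u v) (h ▸ prefix_append v u) huv
  have h' : u ++ v' = v' ++ u := by simpa using h
  obtain ⟨x, k, m, rfl, rfl⟩ :=
    ih (u.length + v'.length) (by simp [← hn, length_pos_iff.2 hu]) h' rfl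
  exact ⟨x, k, k + m, rfl, by rw [replicate_add, flatten_append]⟩

theorem take_length_drop_append_self {w : List α} {i : ℕ} (hi : i ≤ w.length) :
    ((w ++ w).drop i).take w.length = w.drop i ++ w.take i := by
  rw [drop_append_of_le_length hi, take_append, take_of_length_le (by simp)]
  simp [Nat.sub_sub_self hi]

end List

open List in
theorem Primitive.eq_nil_or_eq_nil_of_append_comm {α : Type*} {u v : List α}
    (hw : Primitive (u ++ v)) (h : u ++ v = v ++ u) : u = [] ∨ v = [] := by
  obtain ⟨x, k, m, rfl, rfl⟩ := exists_eq_flatten_replicate_of_append_comm h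
  by_contra! hne
  refine hw x (k + m) ?_ (by rw [replicate_add, flatten_append])
  have hk : k ≠ 0 := by rintro rfl; simp at hne
  have hm : m ≠ 0 := by rintro rfl; simp at hne
  omega

/-- If `w` is primitive then `ww` has no internal occurrence of `w`:
the only occurrences of `w` in `ww` are at positions `0` and `|w|` (0-based). -/
theorem primitive_square_no_internal_occurrence {α : Type*} (w : List α)
    (hw : Primitive w) (i : ℕ) (hi : i + w.length ≤ (w ++ w).length)
    (hocc : ((w ++ w).drop i).take w.length = w) :
    i = 0 ∨ i = w.length := by
  have hin : i ≤ w.length := by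
    rw [List.length_append] at hi
    omega
  rw [List.take_length_drop_append_self hin] at hocc
  rw [← List.take_append_drop i w] at hw
  have hcomm : w.take i ++ w.drop i = w.drop i ++ w.take i := by
    rw [hocc, List.take_append_drop]
  rcases hw.eq_nil_or_eq_nil_of_append_comm hcomm with h | h
  · left
    simpa [hin] using congrArg List.length h
  · right
    rw [List.drop_eq_nil_iff] at h
    omega
end

section
/- For every k ≥ 2, S_k = A_k B_k A_k A_k, where A_k = S_{k-2} and B_k = Â_k (A_k with last character flipped). -/
@[simp]
lemma hat_concat (z : List Bool) (c : Bool) : hat (z ++ [c]) = z ++ [!c] := by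
  simp [hat]

@[simp]
lemma hat_hat (w : List Bool) : hat (hat w) = w := by
  induction w using List.reverseRecOn <;> simp

lemma hat_append (x : List Bool) {y : List Bool} (hy : y ≠ []) : hat (x ++ y) = x ++ hat y := by
  obtain ⟨z, c, rfl⟩ := (List.eq_nil_or_concat' y).resolve_left hy
  rw [← List.append_assoc, hat_concat, hat_concat, List.append_assoc]

lemma hat_ne_nil {w : List Bool} (hw : w ≠ []) : hat w ≠ [] := by
  obtain ⟨z, c, rfl⟩ := (List.eq_nil_or_concat' w).resolve_left hw
  simp

lemma hat_flatMap {f : Bool → List Bool} (hf : ∀ c, f c ≠ []) (hf_not : ∀ c, f (!c) = hat (f c))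
    (w : List Bool) : hat (w.flatMap f) = (hat w).flatMap f := by
  induction w using List.reverseRecOn with
  | nil => rfl
  | append_singleton z c _ =>
    simp only [hat_concat, List.flatMap_append, List.flatMap_singleton, hat_append _ (hf c),
      hf_not]

lemma pdPhi_ne_nil (c : Bool) : pdPhi c ≠ [] := by
  cases c <;> simp [pdPhi]

lemma pd_ne_nil (k : ℕ) : pd k ≠ [] := by
  induction k with
  | zero => simp [pd]
  | succ n ih => simp [pd_succ, ih]

theorem pd_ABAA (k : ℕ) (hk : 2 ≤ k) :
    pd k = pd (k - 2) ++ hat (pd (k - 2)) ++ pd (k - 2) ++ pd (k - 2) := by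
  obtain ⟨m, rfl⟩ := Nat.exists_eq_add_of_le' hk
  rw [Nat.add_sub_cancel, pd_succ, pd_succ, hat_append _ (hat_ne_nil (pd_ne_nil m)), hat_hat]
  simp only [List.append_assoc]
end

section
/- For every k ≥ 2, neither A_k A_k nor A_k B_k nor B_k A_k has an internal occurrence of A_k (an occurrence that is not a prefix and not a suffix), where A_k = S_{k-2} and B_k = Â_k. -/
/-- `y` occurs in `w` at (0-based) position `i`. -/
def OccAt {α : Type*} (y w : List α) (i : ℕ) : Prop :=
  i + y.length ≤ w.length ∧ (w.drop i).take y.length = y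

/-- The number of occurrences (starting positions) of `y` in `w`. -/
def occCount {α : Type*} [DecidableEq α] (y w : List α) : ℕ :=
  ((List.range (w.length + 1)).filter
    (fun i => decide (i + y.length ≤ w.length ∧ (w.drop i).take y.length = y))).length

/-! The period-doubling morphism is injective, uniformly of length 2 and puts `a` at every even
position. So an occurrence of `φ(x)` (with `x` starting with `a`, hence `φ(x)` with `ab`) in
`φ(u)` cannot start at an odd position, and an occurrence at an even position `2j` is the image
of an occurrence of `x` at `j`. Internal occurrences therefore pull back along `φ`, and since
`A_{k+1} = φ(A_k)`, `B_{k+1} = φ(B_k)`, the claim follows by induction from `k = 2`, where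
`A` has length one and no internal occurrence is possible. -/

def HasInternalOcc {α : Type*} (y w : List α) : Prop :=
  ∃ i, OccAt y w i ∧ i ≠ 0 ∧ i + y.length ≠ w.length

theorem not_hasInternalOcc_of_length_le {α : Type*} {y w : List α}
    (h : w.length ≤ y.length + 1) : ¬ HasInternalOcc y w := by
  rintro ⟨i, ⟨hle, -⟩, hi0, hne⟩
  omega

theorem length_flatMap_pdPhi (u : List Bool) : (u.flatMap pdPhi).length = 2 * u.length := by
  induction u with
  | nil => rfl
  | cons c u ih => cases c <;> simp [pdPhi, ih] <;> omega

theorem drop_two_mul_flatMap_pdPhi (u : List Bool) (j : ℕ) :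
    (u.flatMap pdPhi).drop (2 * j) = (u.drop j).flatMap pdPhi := by
  induction u generalizing j with
  | nil => simp
  | cons c u ih =>
    cases j with
    | zero => simp
    | succ j => cases c <;> simp [pdPhi, Nat.mul_succ, ih]

theorem take_two_mul_flatMap_pdPhi (u : List Bool) (j : ℕ) :
    (u.flatMap pdPhi).take (2 * j) = (u.take j).flatMap pdPhi := by
  induction u generalizing j with
  | nil => simp
  | cons c u ih =>
    cases j with
    | zero => simp
    | succ j => cases c <;> simp [pdPhi, Nat.mul_succ, ih]

theorem flatMap_pdPhi_injective : Function.Injective (List.flatMap pdPhi) := by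
  intro u
  induction u with
  | nil => rintro (_ | ⟨_ | _, _⟩) h <;> simp_all [pdPhi]
  | cons c u ih =>
    rintro (_ | ⟨d, v⟩) h
    · cases c <;> simp [pdPhi] at h
    · cases c <;> cases d <;> simp [pdPhi] at h <;> rw [ih h]

theorem getElem?_two_mul_flatMap_pdPhi_ne_true (u : List Bool) (j : ℕ) :
    (u.flatMap pdPhi)[2 * j]? ≠ some true := by
  rw [← Nat.add_zero (2 * j), ← List.getElem?_drop, drop_two_mul_flatMap_pdPhi]
  rcases u.drop j with _ | ⟨_ | _, _⟩ <;> simp [pdPhi]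

theorem hat_flatMap_pdPhi {u : List Bool} (hu : u ≠ []) :
    hat (u.flatMap pdPhi) = (hat u).flatMap pdPhi := by
  obtain ⟨v, c, rfl⟩ := (List.eq_nil_or_concat' u).resolve_left hu
  cases c <;> simp [hat, pdPhi]

theorem not_hasInternalOcc_flatMap_pdPhi {x u : List Bool} (hx : x.head? = some false)
    (h : ¬ HasInternalOcc x u) : ¬ HasInternalOcc (x.flatMap pdPhi) (u.flatMap pdPhi) := by
  rintro ⟨i, ⟨hle, hocc⟩, hi0, hne⟩
  simp only [length_flatMap_pdPhi] at hle hne hocc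
  obtain ⟨j, rfl | rfl⟩ := Nat.even_or_odd' i
  · rw [drop_two_mul_flatMap_pdPhi, take_two_mul_flatMap_pdPhi] at hocc
    exact h ⟨j, ⟨by omega, flatMap_pdPhi_injective hocc⟩, by omega, by omega⟩
  · obtain ⟨x, rfl⟩ := List.head?_eq_some_iff.mp hx
    have hsecond : (u.flatMap pdPhi)[2 * (j + 1)]? = some true :=
      calc (u.flatMap pdPhi)[2 * (j + 1)]?
          = ((u.flatMap pdPhi).drop (2 * j + 1))[1]? := by rw [List.getElem?_drop]; ring_nf
        _ = (((u.flatMap pdPhi).drop (2 * j + 1)).take (2 * (false :: x).length))[1]? :=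
          (List.getElem?_take_of_lt (by simp only [List.length_cons]; omega)).symm
        _ = some true := by rw [hocc]; simp [pdPhi]
    exact getElem?_two_mul_flatMap_pdPhi_ne_true u (j + 1) hsecond

theorem head?_pd (n : ℕ) : (pd n).head? = some false := by
  induction n with
  | zero => rfl
  | succ n ih => obtain ⟨t, ht⟩ := List.head?_eq_some_iff.mp ih; simp [pd, ht, pdPhi]

theorem not_hasInternalOcc_pd (n : ℕ) :
    ¬ HasInternalOcc (pd n) (pd n ++ pd n) ∧
    ¬ HasInternalOcc (pd n) (pd n ++ hat (pd n)) ∧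
    ¬ HasInternalOcc (pd n) (hat (pd n) ++ pd n) := by
  induction n with
  | zero => refine ⟨?_, ?_, ?_⟩ <;> exact not_hasInternalOcc_of_length_le (by decide)
  | succ n ih =>
    have hne : pd n ≠ [] := fun h => by simpa [h] using head?_pd n
    rw [show pd (n + 1) = (pd n).flatMap pdPhi from rfl, hat_flatMap_pdPhi hne]
    simp only [← List.flatMap_append]
    exact ⟨not_hasInternalOcc_flatMap_pdPhi (head?_pd n) ih.1,
      not_hasInternalOcc_flatMap_pdPhi (head?_pd n) ih.2.1,
      not_hasInternalOcc_flatMap_pdPhi (head?_pd n) ih.2.2⟩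

theorem pd_no_internal_occurrence_general (k : ℕ) :
    (¬ ∃ i, OccAt (pd (k-2)) (pd (k-2) ++ pd (k-2)) i ∧ i ≠ 0 ∧
        i + (pd (k-2)).length ≠ (pd (k-2) ++ pd (k-2)).length) ∧
    (¬ ∃ i, OccAt (pd (k-2)) (pd (k-2) ++ hat (pd (k-2))) i ∧ i ≠ 0 ∧
        i + (pd (k-2)).length ≠ (pd (k-2) ++ hat (pd (k-2))).length) ∧
    (¬ ∃ i, OccAt (pd (k-2)) (hat (pd (k-2)) ++ pd (k-2)) i ∧ i ≠ 0 ∧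
        i + (pd (k-2)).length ≠ (hat (pd (k-2)) ++ pd (k-2)).length) :=
  not_hasInternalOcc_pd (k - 2)

/-- For `k ≥ 2`, with `A = S_{k-2}` and `B = Â`, none of `AA`, `AB`, `BA` has an
internal occurrence of `A` (an occurrence that is neither a prefix nor a suffix). -/
theorem pd_no_internal_occurrence (k : ℕ) (hk : 2 ≤ k) :
    (¬ ∃ i, OccAt (pd (k-2)) (pd (k-2) ++ pd (k-2)) i ∧ i ≠ 0 ∧
        i + (pd (k-2)).length ≠ (pd (k-2) ++ pd (k-2)).length) ∧
    (¬ ∃ i, OccAt (pd (k-2)) (pd (k-2) ++ hat (pd (k-2))) i ∧ i ≠ 0 ∧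
        i + (pd (k-2)).length ≠ (pd (k-2) ++ hat (pd (k-2))).length) ∧
    (¬ ∃ i, OccAt (pd (k-2)) (hat (pd (k-2)) ++ pd (k-2)) i ∧ i ≠ 0 ∧
        i + (pd (k-2)).length ≠ (hat (pd (k-2)) ++ pd (k-2)).length) :=
  pd_no_internal_occurrence_general k
end

section
/- If w is primitive, then any proper cyclic rotation α of w occurs exactly once as a substring of ww. -/
namespace List

variable {α : Type*}

theorem exists_flatten_replicate_of_append_comm {a b : List α} (h : a ++ b = b ++ a) :
    ∃ c i j, a = (replicate i c).flatten ∧ b = (replicate j c).flatten := by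
  induction hn : a.length + b.length using Nat.strong_induction_on generalizing a b with
  | _ n ih =>
  wlog hab : a.length ≤ b.length generalizing a b
  · obtain ⟨c, i, j, hb, ha⟩ := this h.symm (by omega) (by omega)
    exact ⟨c, j, i, ha, hb⟩
  rcases eq_or_ne a [] with rfl | ha
  · exact ⟨b, 0, 1, by simp, by simp⟩
  obtain ⟨b', rfl⟩ : a <+: b :=
    prefix_of_prefix_length_le (h ▸ prefix_append a b) (prefix_append b a) hab
  have hcomm : a ++ b' = b' ++ a := by simpa using h
  have hlen : a.length + b'.length < n := by
    have := length_pos_iff.2 ha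
    simp only [length_append] at hn
    omega
  obtain ⟨c, i, j, hac, hbc⟩ := ih _ hlen hcomm rfl
  exact ⟨c, i, i + j, hac, by rw [replicate_add, flatten_append, ← hac, ← hbc]⟩

theorem rotate_eq_take_drop_append_self {w : List α} {i : ℕ} (hi : i ≤ w.length) :
    w.rotate i = ((w ++ w).drop i).take w.length := by
  rw [drop_append_of_le_length hi, take_append, length_drop,
    take_of_length_le (by rw [length_drop]; omega), Nat.sub_sub_self hi,
    rotate_eq_drop_append_take hi]

end List

theorem Primitive.rotate_ne_self {α : Type*} {w : List α} (hw : Primitive w) {d : ℕ}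
    (hd₀ : 0 < d) (hd : d < w.length) : w.rotate d ≠ w := by
  intro h
  rw [List.rotate_eq_drop_append_take hd.le] at h
  obtain ⟨c, i, j, hi, hj⟩ := List.exists_flatten_replicate_of_append_comm
    (a := w.take d) (b := w.drop d) (by rw [List.take_append_drop, h])
  have hi₀ : i ≠ 0 := by
    rintro rfl
    simp [List.take_eq_nil_iff, hd₀.ne', List.ne_nil_of_length_pos (hd₀.trans hd)] at hi
  have hj₀ : j ≠ 0 := by
    rintro rfl
    simp at hj
    omega
  exact hw c (i + j) (by omega)
    (by rw [← List.take_append_drop d w, hi, hj, List.replicate_add, List.flatten_append])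

theorem Primitive.rotate_injOn {α : Type*} {w : List α} (hw : Primitive w) :
    Set.InjOn w.rotate (Set.Iio w.length) := by
  intro i hi j hj hij
  wlog hle : i ≤ j generalizing i j
  · exact (this hj hi hij.symm (by omega)).symm
  by_contra hne
  refine hw.rotate_ne_self (d := j - i) (by omega) (by simp only [Set.mem_Iio] at hj; omega) ?_
  rw [← List.rotate_eq_rotate (n := i), List.rotate_rotate, Nat.sub_add_cancel hle, hij]

theorem occAt_append_self_iff {α : Type*} {y w : List α} (hy : y.length = w.length) {i : ℕ} :
    OccAt y (w ++ w) i ↔ i ≤ w.length ∧ w.rotate i = y := by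
  rw [OccAt, hy, List.length_append]
  constructor
  · rintro ⟨hi, hocc⟩
    have hi' : i ≤ w.length := by omega
    exact ⟨hi', by rw [List.rotate_eq_take_drop_append_self hi', hocc]⟩
  · rintro ⟨hi, rfl⟩
    exact ⟨by omega, (List.rotate_eq_take_drop_append_self hi).symm⟩

theorem occCount_eq_one_of_forall_occAt_iff {α : Type*} [DecidableEq α] {y w : List α} {t : ℕ}
    (h : ∀ i, OccAt y w i ↔ i = t) : occCount y w = 1 := by
  have ht : t < w.length + 1 := by
    have := ((h t).2 rfl).1
    omega
  rw [occCount, List.filter_congr (q := (· == t)) (fun i _ => by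
      rw [Bool.eq_iff_iff, decide_eq_true_iff, beq_iff_eq]; exact h i),
    ← List.countP_eq_length_filter, ← List.count]
  exact List.count_eq_one_of_mem List.nodup_range (List.mem_range.2 ht)

theorem primitive_rotation_unique_occurrence_general {α : Type*} [DecidableEq α]
    (w : List α) (hw : Primitive w) (t : ℕ)
    (hproper : w.drop t ++ w.take t ≠ w) :
    occCount (w.drop t ++ w.take t) (w ++ w) = 1 := by
  have ht : t < w.length := by
    by_contra! ht
    simp [List.drop_eq_nil_of_le ht, List.take_of_length_le ht] at hproper
  rw [← List.rotate_eq_drop_append_take ht.le] at hproper ⊢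
  apply occCount_eq_one_of_forall_occAt_iff
  intro i
  rw [occAt_append_self_iff (w.length_rotate t)]
  constructor
  · rintro ⟨hi, hrot⟩
    rcases hi.lt_or_eq with hi | rfl
    · exact hw.rotate_injOn hi ht hrot
    · rw [List.rotate_length] at hrot
      exact absurd hrot.symm hproper
  · rintro rfl
    exact ⟨ht.le, rfl⟩

/-- A proper cyclic rotation of a primitive string `w` occurs exactly once in `ww`. -/
theorem primitive_rotation_unique_occurrence {α : Type*} [DecidableEq α]
    (w : List α) (hw : Primitive w) (t : ℕ) (ht : t < w.length)
    (hproper : w.drop t ++ w.take t ≠ w) :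
    occCount (w.drop t ++ w.take t) (w ++ w) = 1 :=
  primitive_rotation_unique_occurrence_general w hw t hproper
end
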